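/- Let g, h : ℝ^{d-1} → ℝ be (1/3)-Lipschitz polyhedral functions and set f = g - h. Then for every ε > 0 there exists a polyhedral function F : ℝ^d → ℝ with Lip(F) ≤ 4ε such that every point (x, y) ∈ ℝ^{d-1} × ℝ with |y - f(x)| ≤ ε belongs to S(F). Concretely, F(x,y) = 2ε·max(2g(x) - y, y + 2h(x)) works. -/

import Mathlib

open Set RealInnerProductSpace

section Defs

variable {V : Type*} [NormedAddCommGroup V] [InnerProductSpace ℝ V]

/-- A function on a real inner product space is polyhedral if it is the maximum of finitely
many affine functions. -/
def IsPolyhedral (g : V → ℝ) : Prop :=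
  ∃ (n : ℕ) (v : Fin (n + 1) → V) (c : Fin (n + 1) → ℝ),
    ∀ x, g x = Finset.univ.sup' Finset.univ_nonempty (fun i => ⟪v i, x⟫ + c i)

/-- `y` is a proximal point of `f` at `x`: it minimizes `z ↦ f z + ‖x - z‖² / 2`. -/
def IsProxPt (f : V → ℝ) (x y : V) : Prop :=
  ∀ z, f y + ‖x - y‖ ^ 2 / 2 ≤ f z + ‖x - z‖ ^ 2 / 2

/-- The generalized strip `S(f)`: points `x` such that `f` is not differentiable at
`prox_f(x)`. -/
def GStrip (f : V → ℝ) : Set V :=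
  {x | ∀ y, IsProxPt f x y → ¬ DifferentiableAt ℝ f y}

end Defs

lemma max_sup' {n m : ℕ} (f : Fin (n+1) → ℝ) (f2 : Fin (m+1) → ℝ) :
    max (Finset.univ.sup' Finset.univ_nonempty f) (Finset.univ.sup' Finset.univ_nonempty f2)
      = Finset.univ.sup' Finset.univ_nonempty
          (fun i : Fin (n + 1 + m + 1) => Fin.addCases (motive := fun _ => ℝ) f f2 (Fin.cast (by omega) i)) := by
  apply le_antisymm
  · apply max_le
    · apply Finset.sup'_le
      intro i _
      have : f i = (fun i : Fin (n + 1 + m + 1) => Fin.addCases (motive := fun _ => ℝ) f f2 (Fin.cast (by omega) i)) (Fin.cast (by omega) (Fin.castAdd (m+1) i)) := by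
        simp
      rw [this]
      exact Finset.le_sup' _ (Finset.mem_univ _)
    · apply Finset.sup'_le
      intro i _
      have : f2 i = (fun i : Fin (n + 1 + m + 1) => Fin.addCases (motive := fun _ => ℝ) f f2 (Fin.cast (by omega) i)) (Fin.cast (by omega) (Fin.natAdd (n+1) i)) := by
        simp
      rw [this]
      exact Finset.le_sup' _ (Finset.mem_univ _)
  · apply Finset.sup'_le
    intro i _
    induction (Fin.cast (by omega : n+1+m+1 = n+1+(m+1)) i) using Fin.addCases with
    | left j =>
        simp only [Fin.addCases_left]
        exact le_max_of_le_left (Finset.le_sup' f (Finset.mem_univ j))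
    | right j =>
        simp only [Fin.addCases_right]
        exact le_max_of_le_right (Finset.le_sup' f2 (Finset.mem_univ j))

lemma vert {ε u w : ℝ} (hε : 0 < ε) (hu : 0 < u)
    (H : ∀ t : ℝ, t ≤ u → 0 ≤ t * (t/2 - 2*ε - w)) : w = -2*ε := by
  rcases lt_trichotomy (-2*ε - w) 0 with hc | hc | hc
  · exfalso
    have h1 := H (min u (-(-2*ε - w))) (min_le_left _ _)
    have h2 : 0 < min u (-(-2*ε - w)) := lt_min hu (by linarith)
    nlinarith [min_le_right u (-(-2*ε - w))]
  · linarith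
  · exfalso
    have h1 := H (-(-2*ε - w)) (by linarith)
    nlinarith

lemma horiz {ε s t₀ : ℝ} (hε : 0 < ε) (hs : 0 < s) (ht₀ : 0 < t₀)
    (H : ∀ t, 0 < t → t < t₀ → t*(2-t)*s^2 ≤ (8/3)*ε*t*s) : s ≤ (4/3)*ε := by
  by_contra hcon
  push_neg at hcon
  have hτ : 0 < 2 - 8*ε/(3*s) := by
    have : 8*ε/(3*s) < 2 := by rw [div_lt_iff₀ (by linarith)]; linarith
    linarith
  set t := min (t₀/2) ((2 - 8*ε/(3*s))/2) with ht
  have htpos : 0 < t := lt_min (by linarith) (by linarith)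
  have h1 := H t htpos (lt_of_le_of_lt (min_le_left _ _) (by linarith))
  have h2 : t ≤ (2 - 8*ε/(3*s))/2 := min_le_right _ _
  have h2' : 8*ε ≤ (2 - 2*t)*(3*s) := by
    rw [← div_le_iff₀ (by linarith : (0:ℝ) < 3*s)]
    linarith
  nlinarith [mul_pos htpos hs, mul_pos (mul_pos htpos hs) hs]

lemma maxabs (ε C u : ℝ) (hε : 0 ≤ ε) :
    max (2*ε*(C+u)) (2*ε*(C-u)) = 2*ε*C + 2*ε*|u| := by
  rcases le_total 0 u with hu | hu
  · rw [abs_of_nonneg hu, max_eq_left (by nlinarith)]; ring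
  · rw [abs_of_nonpos hu, max_eq_right (by nlinarith)]; ring

theorem WithLp.equiv_symm_fst {p : ENNReal} {α β : Type*} (x : α × β) :
    ((WithLp.equiv p (α × β)).symm x).fst = x.fst := rfl

theorem WithLp.equiv_symm_snd {p : ENNReal} {α β : Type*} (x : α × β) :
    ((WithLp.equiv p (α × β)).symm x).snd = x.snd := rfl

set_option maxHeartbeats 4000000 in
/-- Let `g, h : ℝ^(d-1) → ℝ` be `(1/3)`-Lipschitz polyhedral functions and
`f = g - h`.  For every `ε > 0` there is a polyhedral `F : ℝ^(d-1) × ℝ → ℝ` (on the `L²`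
product, i.e. `ℝ^d`) with `Lip(F) ≤ 4ε` such that every point `(x, y)` with
`|y - f x| ≤ ε` belongs to `S(F)`. -/
theorem graph_neighborhood_in_gstrip (d : ℕ)
    (g h : EuclideanSpace ℝ (Fin d) → ℝ)
    (hg : IsPolyhedral g) (hh : IsPolyhedral h)
    (hgl : ∀ x y, |g x - g y| ≤ (1 / 3) * ‖x - y‖)
    (hhl : ∀ x y, |h x - h y| ≤ (1 / 3) * ‖x - y‖)
    (ε : ℝ) (hε : 0 < ε) :
    ∃ F : WithLp 2 (EuclideanSpace ℝ (Fin d) × ℝ) → ℝ, IsPolyhedral F ∧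
      (∀ a b, |F a - F b| ≤ (4 * ε) * ‖a - b‖) ∧
      ∀ (x : EuclideanSpace ℝ (Fin d)) (y : ℝ), |y - (g x - h x)| ≤ ε →
        (WithLp.equiv 2 (EuclideanSpace ℝ (Fin d) × ℝ)).symm (x, y) ∈ GStrip F := by
  classical
  set F : WithLp 2 (EuclideanSpace ℝ (Fin d) × ℝ) → ℝ :=
    fun z => max (2*ε*(2 * g z.fst - z.snd)) (2*ε*(z.snd + 2 * h z.fst)) with hF
  have normsq : ∀ z : WithLp 2 (EuclideanSpace ℝ (Fin d) × ℝ),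
      ‖z‖^2 = ‖z.fst‖^2 + (z.snd)^2 := by
    intro z
    rw [WithLp.prod_norm_sq_eq_of_L2, Real.norm_eq_abs, sq_abs]
  refine ⟨F, ?_, ?_, ?_⟩
  · -- polyhedral
    obtain ⟨n, v, c, hgc⟩ := hg
    obtain ⟨m, vh, ch, hhc⟩ := hh
    set V1 : Fin (n+1) → WithLp 2 (EuclideanSpace ℝ (Fin d) × ℝ) :=
      fun i => (WithLp.equiv 2 (EuclideanSpace ℝ (Fin d) × ℝ)).symm ((4*ε) • v i, -(2*ε)) with hV1
    set C1 : Fin (n+1) → ℝ := fun i => 4*ε * c i with hC1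
    set V2 : Fin (m+1) → WithLp 2 (EuclideanSpace ℝ (Fin d) × ℝ) :=
      fun i => (WithLp.equiv 2 (EuclideanSpace ℝ (Fin d) × ℝ)).symm ((4*ε) • vh i, 2*ε) with hV2
    set C2 : Fin (m+1) → ℝ := fun i => 4*ε * ch i with hC2
    refine ⟨n + 1 + m, fun i => Fin.addCases (motive := fun _ => WithLp 2 (EuclideanSpace ℝ (Fin d) × ℝ)) V1 V2 (Fin.cast (by omega) i),
      fun i => Fin.addCases (motive := fun _ => ℝ) C1 C2 (Fin.cast (by omega) i), ?_⟩
    intro z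
    have e1 : 2*ε*(2 * g z.fst - z.snd)
        = Finset.univ.sup' Finset.univ_nonempty (fun i => ⟪V1 i, z⟫ + C1 i) := by
      rw [hgc]
      rw [Finset.comp_sup'_eq_sup'_comp _ (fun t => 2*ε*(2*t - z.snd))
        (fun x y => by
          have hm : Monotone (fun t : ℝ => 2*ε*(2*t - z.snd)) := fun a b hab => by dsimp only; nlinarith
          exact hm.map_max)]
      apply Finset.sup'_congr _ rfl
      intro i _
      simp only [Function.comp, hV1, hC1, WithLp.prod_inner_apply, WithLp.ofLp_fst, WithLp.ofLp_snd, WithLp.equiv_symm_fst,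
        WithLp.equiv_symm_snd, real_inner_smul_left, RCLike.inner_apply, conj_trivial]
      ring
    have e2 : 2*ε*(z.snd + 2 * h z.fst)
        = Finset.univ.sup' Finset.univ_nonempty (fun i => ⟪V2 i, z⟫ + C2 i) := by
      rw [hhc]
      rw [Finset.comp_sup'_eq_sup'_comp _ (fun t => 2*ε*(z.snd + 2*t))
        (fun x y => by
          have hm : Monotone (fun t : ℝ => 2*ε*(z.snd + 2*t)) := fun a b hab => by dsimp only; nlinarith
          exact hm.map_max)]
      apply Finset.sup'_congr _ rfl
      intro i _
      simp only [Function.comp, hV2, hC2, WithLp.prod_inner_apply, WithLp.ofLp_fst, WithLp.ofLp_snd, WithLp.equiv_symm_fst,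
        WithLp.equiv_symm_snd, real_inner_smul_left, RCLike.inner_apply, conj_trivial]
      ring
    rw [hF]
    dsimp only
    rw [e1, e2]
    rw [show (Finset.univ.sup' Finset.univ_nonempty (fun i => ⟪V1 i, z⟫ + C1 i)) ⊔
        (Finset.univ.sup' Finset.univ_nonempty (fun i => ⟪V2 i, z⟫ + C2 i))
      = Finset.univ.sup' Finset.univ_nonempty (fun i : Fin (n+1+m+1) =>
          Fin.addCases (motive := fun _ => ℝ) (fun i => ⟪V1 i, z⟫ + C1 i)
            (fun i => ⟪V2 i, z⟫ + C2 i) (Fin.cast (by omega) i)) from max_sup' _ _]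
    apply Finset.sup'_congr _ rfl
    intro i _
    induction (Fin.cast (by omega : n+1+m+1 = n+1+(m+1)) i) using Fin.addCases with
    | left j => simp
    | right j => simp
  · -- Lipschitz
    intro a b
    rw [hF]
    dsimp only
    have e := normsq (a - b)
    rw [WithLp.sub_fst, WithLp.sub_snd] at e
    have h1 : ‖a.fst - b.fst‖ ≤ ‖a - b‖ := by
      nlinarith [norm_nonneg (a - b), norm_nonneg (a.fst - b.fst), sq_nonneg (a.snd - b.snd)]
    have h2 : |a.snd - b.snd| ≤ ‖a - b‖ := by
      nlinarith [norm_nonneg (a - b), abs_nonneg (a.snd - b.snd), sq_abs (a.snd - b.snd),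
        sq_nonneg ‖a.fst - b.fst‖]
    have h2' := abs_le.mp h2
    have hga : |g a.fst - g b.fst| ≤ (1/3) * ‖a - b‖ := (hgl a.fst b.fst).trans (by linarith)
    have hha : |h a.fst - h b.fst| ≤ (1/3) * ‖a - b‖ := (hhl a.fst b.fst).trans (by linarith)
    have hga' := abs_le.mp hga
    have hha' := abs_le.mp hha
    have hnn : 0 ≤ ε * ‖a - b‖ := mul_nonneg hε.le (norm_nonneg _)
    refine le_trans (abs_max_sub_max_le_max _ _ _ _) (max_le ?_ ?_) <;> rw [abs_le] <;>
      constructor <;> nlinarith [mul_le_mul_of_nonneg_left hga'.1 hε.le,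
        mul_le_mul_of_nonneg_left hga'.2 hε.le, mul_le_mul_of_nonneg_left hha'.1 hε.le,
        mul_le_mul_of_nonneg_left hha'.2 hε.le, mul_le_mul_of_nonneg_left h2'.1 hε.le,
        mul_le_mul_of_nonneg_left h2'.2 hε.le]
  · -- GStrip
    intro x₀ y₀ hy
    simp only [GStrip, Set.mem_setOf_eq]
    intro q hq hdiff
    set p := (WithLp.equiv 2 (EuclideanSpace ℝ (Fin d) × ℝ)).symm (x₀, y₀) with hp
    set x₁ := q.fst with hx₁
    set y₁ := q.snd with hy₁
    set u := g x₁ - h x₁ - y₁ with hu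
    set w := y₀ - y₁ with hw
    set s := ‖x₀ - x₁‖ with hs
    have hq_eq : (WithLp.equiv 2 (EuclideanSpace ℝ (Fin d) × ℝ)).symm (x₁, y₁) = q := rfl
    have hnorm : ∀ (a : EuclideanSpace ℝ (Fin d)) (b : ℝ),
        ‖p - (WithLp.equiv 2 (EuclideanSpace ℝ (Fin d) × ℝ)).symm (a, b)‖^2
          = ‖x₀ - a‖^2 + (y₀ - b)^2 := by
      intro a b
      rw [normsq, WithLp.sub_fst, WithLp.sub_snd, hp, WithLp.equiv_symm_fst,
        WithLp.equiv_symm_snd, WithLp.equiv_symm_fst, WithLp.equiv_symm_snd]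
    have hpq : ‖p - q‖^2 = s^2 + w^2 := by
      rw [← hq_eq, hnorm]
    have hFq : F q = 2*ε*(g x₁ + h x₁) + 2*ε*|u| := by
      rw [hF]
      dsimp only
      rw [show 2 * g q.fst - q.snd = (g x₁ + h x₁) + u from by rw [hu]; ring,
        show q.snd + 2 * h q.fst = (g x₁ + h x₁) - u from by rw [hu]; ring]
      exact maxabs ε _ u hε.le
    have Hv : ∀ t : ℝ, 2*ε*|u| + w^2/2 ≤ 2*ε*|u - t| + (w - t)^2/2 := by
      intro t
      have h0 := hq ((WithLp.equiv 2 (EuclideanSpace ℝ (Fin d) × ℝ)).symm (x₁, y₁ + t))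
      have hFz : F ((WithLp.equiv 2 (EuclideanSpace ℝ (Fin d) × ℝ)).symm (x₁, y₁ + t))
          = 2*ε*(g x₁ + h x₁) + 2*ε*|u - t| := by
        rw [hF]
        dsimp only
        rw [WithLp.equiv_symm_fst, WithLp.equiv_symm_snd]
        rw [show 2 * g x₁ - (y₁ + t) = (g x₁ + h x₁) + (u - t) from by rw [hu]; ring,
          show (y₁ + t) + 2 * h x₁ = (g x₁ + h x₁) - (u - t) from by rw [hu]; ring]
        exact maxabs ε _ _ hε.le
      rw [hFq, hFz, hpq, hnorm] at h0
      have : y₀ - (y₁ + t) = w - t := by rw [hw]; ring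
      rw [this] at h0
      linarith
    rcases lt_trichotomy u 0 with hult | hu0 | hugt
    · -- u < 0 : F q = 2ε(y₁+2h₁), w = 2ε
      have hwv : -w = -2*ε := by
        apply vert hε (by linarith : (0:ℝ) < -u)
        intro t ht
        have h0 := Hv (-t)
        rw [show u - -t = u + t from by ring, abs_of_nonpos (by linarith : u + t ≤ 0),
          abs_of_neg hult] at h0
        nlinarith
      have hwe : w = 2*ε := by linarith
      have hy' := abs_le.mp hy
      rcases eq_or_lt_of_le (norm_nonneg (x₀ - x₁)) with hs0 | hspos
      · have hxx : x₀ = x₁ := by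
          rw [← sub_eq_zero]
          exact norm_eq_zero.mp (hs ▸ hs0.symm)
        rw [hxx] at hy'
        rw [hu] at hult
        rw [hw] at hwe
        linarith [hy'.1, hy'.2]
      · have hspos' : 0 < s := hspos
        have Hh : ∀ t, 0 < t → t < 3*(-u)/(2*s) → t*(2-t)*s^2 ≤ (8/3)*ε*t*s := by
          intro t ht htlt
          set xt := x₁ + t • (x₀ - x₁) with hxt
          have hnt : ‖xt - x₁‖ = t * s := by
            rw [hxt, add_sub_cancel_left, norm_smul, Real.norm_eq_abs, abs_of_pos ht]
          have hgd := abs_le.mp (hgl xt x₁)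
          have hhd := abs_le.mp (hhl xt x₁)
          rw [hnt] at hgd hhd
          have h5 : t*(2*s) < 3*(-u) := (lt_div_iff₀ (by linarith)).mp htlt
          have hneg : g xt - h xt - y₁ < 0 := by nlinarith [hgd.2, hhd.1]
          have hbr : 2*ε*(2 * g xt - y₁) ≤ 2*ε*(y₁ + 2 * h xt) := by
            nlinarith [mul_pos hε (by linarith : (0:ℝ) < -(g xt - h xt - y₁))]
          have hz := hq ((WithLp.equiv 2 (EuclideanSpace ℝ (Fin d) × ℝ)).symm (xt, y₁))
          have hFz : F ((WithLp.equiv 2 (EuclideanSpace ℝ (Fin d) × ℝ)).symm (xt, y₁))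
              = 2*ε*(y₁ + 2 * h xt) := by
            rw [hF]
            dsimp only
            rw [WithLp.equiv_symm_fst, WithLp.equiv_symm_snd]
            exact max_eq_right hbr
          have hFq' : F q = 2*ε*(y₁ + 2 * h x₁) := by
            rw [hFq, abs_of_neg hult, hu]
            ring
          have hxnorm : ‖x₀ - xt‖^2 = (1-t)^2 * s^2 := by
            rw [show x₀ - xt = (1-t) • (x₀ - x₁) from by rw [hxt, sub_smul, one_smul]; module]
            rw [norm_smul, Real.norm_eq_abs, mul_pow, sq_abs]
          rw [hFz, hFq', hpq, hnorm, hxnorm] at hz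
          nlinarith [mul_le_mul_of_nonneg_left hhd.2 (by linarith : (0:ℝ) ≤ 8*ε)]
        have hsle : s ≤ (4/3)*ε := horiz hε hspos' (by apply div_pos <;> linarith) Hh
        have hga := abs_le.mp (hgl x₁ x₀)
        have hha := abs_le.mp (hhl x₁ x₀)
        rw [show ‖x₁ - x₀‖ = s from by rw [hs, norm_sub_rev]] at hga hha
        rw [hu] at hult
        rw [hw] at hwe
        linarith [hy'.1, hy'.2, hga.1, hga.2, hha.1, hha.2]
    · -- u = 0 : nondifferentiable
      set e : WithLp 2 (EuclideanSpace ℝ (Fin d) × ℝ) :=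
        (WithLp.equiv 2 (EuclideanSpace ℝ (Fin d) × ℝ)).symm (0, 1) with he
      have hL : DifferentiableAt ℝ (fun t : ℝ => q + t • e) 0 :=
        (differentiableAt_id.smul_const e).const_add q
      have hq0 : q + (0:ℝ) • e = q := by rw [zero_smul, add_zero]
      have hcomp : DifferentiableAt ℝ (fun t : ℝ => F (q + t • e)) 0 := by
        have := DifferentiableAt.comp 0 (hq0.symm ▸ hdiff) hL
        exact this
      have hy1 : y₁ = g x₁ - h x₁ := by rw [hu] at hu0; linarith
      have habs : (fun t : ℝ => F (q + t • e)) = fun t => 2*ε*(g x₁ + h x₁) + 2*ε*|t| := by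
        funext t
        have hfst : (q + t • e).fst = x₁ := by
          rw [WithLp.add_fst, WithLp.smul_fst, he, WithLp.equiv_symm_fst, smul_zero, add_zero]
        have hsnd : (q + t • e).snd = y₁ + t := by
          rw [WithLp.add_snd, WithLp.smul_snd, he, WithLp.equiv_symm_snd, smul_eq_mul, mul_one]
        rw [hF]
        dsimp only
        rw [hfst, hsnd, hy1]
        rw [show 2 * (g x₁) - (g x₁ - h x₁ + t) = (g x₁ + h x₁) + (-t) from by ring,
          show (g x₁ - h x₁ + t) + 2 * h x₁ = (g x₁ + h x₁) - (-t) from by ring]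
        rw [maxabs ε _ _ hε.le, abs_neg]
      rw [habs] at hcomp
      have hda : DifferentiableAt ℝ (fun t : ℝ => |t|) 0 := by
        have h3 := (hcomp.sub_const (2*ε*(g x₁ + h x₁))).const_mul (2*ε)⁻¹
        have he2 : (fun t : ℝ => (2*ε)⁻¹ * ((2*ε*(g x₁ + h x₁) + 2*ε*|t|) - 2*ε*(g x₁ + h x₁)))
            = fun t : ℝ => |t| := by
          funext t
          field_simp
          ring
        rw [← he2]
        exact h3
      exact not_differentiableAt_abs_zero hda
    · -- u > 0
      have hwv : w = -2*ε := by
        apply vert hε hugt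
        intro t ht
        have h0 := Hv t
        rw [abs_of_nonneg (by linarith : (0:ℝ) ≤ u - t), abs_of_pos hugt] at h0
        nlinarith
      have hy' := abs_le.mp hy
      rcases eq_or_lt_of_le (norm_nonneg (x₀ - x₁)) with hs0 | hspos
      · have hxx : x₀ = x₁ := by
          rw [← sub_eq_zero]
          exact norm_eq_zero.mp (hs ▸ hs0.symm)
        rw [hxx] at hy'
        rw [hu] at hugt
        rw [hw] at hwv
        linarith [hy'.1, hy'.2]
      · have hspos' : 0 < s := hspos
        have Hh : ∀ t, 0 < t → t < 3*u/(2*s) → t*(2-t)*s^2 ≤ (8/3)*ε*t*s := by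
          intro t ht htlt
          set xt := x₁ + t • (x₀ - x₁) with hxt
          have hnt : ‖xt - x₁‖ = t * s := by
            rw [hxt, add_sub_cancel_left, norm_smul, Real.norm_eq_abs, abs_of_pos ht]
          have hgd := abs_le.mp (hgl xt x₁)
          have hhd := abs_le.mp (hhl xt x₁)
          rw [hnt] at hgd hhd
          have h5 : t*(2*s) < 3*u := (lt_div_iff₀ (by linarith)).mp htlt
          have hposp : 0 < g xt - h xt - y₁ := by nlinarith [hgd.1, hhd.2]
          have hbr : 2*ε*(y₁ + 2 * h xt) ≤ 2*ε*(2 * g xt - y₁) := by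
            nlinarith [mul_pos hε hposp]
          have hz := hq ((WithLp.equiv 2 (EuclideanSpace ℝ (Fin d) × ℝ)).symm (xt, y₁))
          have hFz : F ((WithLp.equiv 2 (EuclideanSpace ℝ (Fin d) × ℝ)).symm (xt, y₁))
              = 2*ε*(2 * g xt - y₁) := by
            rw [hF]
            dsimp only
            rw [WithLp.equiv_symm_fst, WithLp.equiv_symm_snd]
            exact max_eq_left hbr
          have hFq' : F q = 2*ε*(2 * g x₁ - y₁) := by
            rw [hFq, abs_of_pos hugt, hu]
            ring
          have hxnorm : ‖x₀ - xt‖^2 = (1-t)^2 * s^2 := by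
            rw [show x₀ - xt = (1-t) • (x₀ - x₁) from by rw [hxt, sub_smul, one_smul]; module]
            rw [norm_smul, Real.norm_eq_abs, mul_pow, sq_abs]
          rw [hFz, hFq', hpq, hnorm, hxnorm] at hz
          nlinarith [mul_le_mul_of_nonneg_left hgd.2 (by linarith : (0:ℝ) ≤ 8*ε)]
        have hsle : s ≤ (4/3)*ε := horiz hε hspos' (by apply div_pos <;> linarith) Hh
        have hga := abs_le.mp (hgl x₁ x₀)
        have hha := abs_le.mp (hhl x₁ x₀)
        rw [show ‖x₁ - x₀‖ = s from by rw [hs, norm_sub_rev]] at hga hha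
        rw [hu] at hugt
        rw [hw] at hwv
        linarith [hy'.1, hy'.2, hga.1, hga.2, hha.1, hha.2]
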